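/- Let r > -1 and let ψ : (-ε, ε) → ℝ be C¹ with ψ > 0 on (-ε, ε). Define F(t) = sign(t)·(sign(t)·∫₀ᵗ |x|^r ψ(x) dx)^{1/(r+1)}. Then F is of class C¹ on a neighborhood of 0, and F'(0) = (r+1)^{-1/(r+1)}·ψ(0)^{1/(r+1)} > 0. -/

import Mathlib

/-!
Substituting `x = t s` gives `∫₀ᵗ |x|^r ψ(x) dx = t |t|^r M(t)` with `M(t) = ∫₀¹ s^r ψ(t s) ds`,
hence `F(t) = t M(t)^{1/(r+1)}`. Since `s^r` is integrable on `[0, 1]`, dominated convergence makes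
`M` continuous, and it is positive with `M(0) = ψ(0)/(r+1)`. Therefore `F'(0) = M(0)^{1/(r+1)}`,
while for `t ≠ 0` the fundamental theorem of calculus and the chain rule give
`F'(t) = ψ(t) M(t)^{1/(r+1) - 1} / (r+1)`; this formula also holds at `0`, and it is continuous.
-/

open Set MeasureTheory intervalIntegral Filter Topology

theorem Real.sign_mul_self_eq_abs (t : ℝ) : Real.sign t * t = |t| := by
  obtain h | rfl | h := lt_trichotomy t 0
  · rw [Real.sign_of_neg h, abs_of_neg h, neg_one_mul]
  · simp
  · rw [Real.sign_of_pos h, abs_of_pos h, one_mul]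

theorem Real.sign_mul_abs_eq_self (t : ℝ) : Real.sign t * |t| = t := by
  obtain h | rfl | h := lt_trichotomy t 0
  · rw [Real.sign_of_neg h, abs_of_neg h, neg_one_mul, neg_neg]
  · simp
  · rw [Real.sign_of_pos h, abs_of_pos h, one_mul]

theorem Real.sign_mul_sign_of_ne_zero {t : ℝ} (ht : t ≠ 0) : Real.sign t * Real.sign t = 1 := by
  rcases Real.sign_apply_eq_of_ne_zero t ht with h | h <;> simp [h]

theorem Real.eventually_sign_eq {t : ℝ} (ht : t ≠ 0) : ∀ᶠ u in 𝓝 t, Real.sign u = Real.sign t := by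
  obtain h | h := ht.lt_or_gt
  · filter_upwards [Iio_mem_nhds h] with u hu
    rw [Real.sign_of_neg hu, Real.sign_of_neg h]
  · filter_upwards [Ioi_mem_nhds h] with u hu
    rw [Real.sign_of_pos hu, Real.sign_of_pos h]

theorem intervalIntegrable_abs_rpow {r : ℝ} (hr : -1 < r) (a b : ℝ) :
    IntervalIntegrable (fun x => |x| ^ r) volume a b := by
  have hnonneg : ∀ c, 0 ≤ c → IntervalIntegrable (fun x => |x| ^ r) volume 0 c := fun c hc =>
    (intervalIntegrable_rpow' hr).congr fun x hx => by
      rw [uIoc_of_le hc] at hx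
      simp only [abs_of_pos hx.1]
  have hzero : ∀ c, IntervalIntegrable (fun x => |x| ^ r) volume 0 c := by
    intro c
    rcases le_total 0 c with hc | hc
    · exact hnonneg c hc
    · rw [IntervalIntegrable.iff_comp_neg]
      simpa only [abs_neg, neg_zero] using hnonneg (-c) (neg_nonneg.2 hc)
  exact (hzero a).symm.trans (hzero b)

theorem hasDerivAt_id_smul_zero_of_continuousAt {𝕜 E : Type*} [NontriviallyNormedField 𝕜]
    [NormedAddCommGroup E] [NormedSpace 𝕜 E] {g : 𝕜 → E} (hg : ContinuousAt g 0) :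
    HasDerivAt (fun t => t • g t) (g 0) 0 := by
  rw [hasDerivAt_iff_tendsto_slope_zero]
  refine (hg.tendsto.mono_left nhdsWithin_le_nhds).congr' ?_
  filter_upwards [self_mem_nhdsWithin] with t ht
  rw [zero_add, zero_smul, sub_zero, smul_smul, inv_mul_cancel₀ ht, one_smul]

theorem contDiffOn_one_of_hasDerivAt {𝕜 F : Type*} [NontriviallyNormedField 𝕜]
    [NormedAddCommGroup F] [NormedSpace 𝕜 F] {f f' : 𝕜 → F} {s : Set 𝕜} (hs : IsOpen s)
    (hf : ∀ x ∈ s, HasDerivAt f (f' x) x) (hf' : ContinuousOn f' s) : ContDiffOn 𝕜 1 f s := by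
  rw [← zero_add 1, contDiffOn_succ_iff_deriv_of_isOpen hs]
  refine ⟨fun x hx => (hf x hx).differentiableAt.differentiableWithinAt, by simp, ?_⟩
  exact contDiffOn_zero.2 (hf'.congr fun x hx => (hf x hx).deriv)

theorem mul_mem_Ioo_of_mem_Icc {ε t s : ℝ} (ht : t ∈ Ioo (-ε) ε) (hs : s ∈ Icc 0 1) :
    t * s ∈ Ioo (-ε) ε := by
  obtain ⟨ht₁, ht₂⟩ := ht
  obtain ⟨hs₀, hs₁⟩ := hs
  constructor <;> nlinarith

noncomputable section

namespace Baldomero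

def weightedPrimitive (r : ℝ) (ψ : ℝ → ℝ) (t : ℝ) : ℝ :=
  ∫ x in (0:ℝ)..t, |x| ^ r * ψ x

def rescaledIntegral (r : ℝ) (ψ : ℝ → ℝ) (t : ℝ) : ℝ :=
  ∫ s in (0:ℝ)..1, s ^ r * ψ (t * s)

def baldomeroMap (r : ℝ) (ψ : ℝ → ℝ) (t : ℝ) : ℝ :=
  Real.sign t * (Real.sign t * weightedPrimitive r ψ t) ^ (1 / (r + 1))

variable {ε r : ℝ} {ψ : ℝ → ℝ}

theorem weightedPrimitive_eq_mul_rescaledIntegral (r : ℝ) (ψ : ℝ → ℝ) (t : ℝ) :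
    weightedPrimitive r ψ t = t * |t| ^ r * rescaledIntegral r ψ t := by
  have hsubst := smul_integral_comp_mul_left (fun x => |x| ^ r * ψ x) (a := 0) (b := 1) t
  rw [mul_zero, mul_one, smul_eq_mul] at hsubst
  rw [weightedPrimitive, ← hsubst, mul_assoc, rescaledIntegral,
    ← intervalIntegral.integral_const_mul (|t| ^ r)]
  refine congrArg (t * ·) (integral_congr fun s hs => ?_)
  rw [uIcc_of_le zero_le_one] at hs
  simp only [abs_mul, abs_of_nonneg hs.1, Real.mul_rpow (abs_nonneg t) hs.1, mul_assoc]

theorem sign_mul_weightedPrimitive (hr : -1 < r) (t : ℝ) :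
    Real.sign t * weightedPrimitive r ψ t = |t| ^ (r + 1) * rescaledIntegral r ψ t := by
  rw [weightedPrimitive_eq_mul_rescaledIntegral, ← mul_assoc, ← mul_assoc,
    Real.sign_mul_self_eq_abs, Real.rpow_add_one' (abs_nonneg t) (by linarith), mul_comm |t|]

theorem rescaledIntegral_zero (hr : -1 < r) : rescaledIntegral r ψ 0 = ψ 0 / (r + 1) := by
  simp only [rescaledIntegral, zero_mul, intervalIntegral.integral_mul_const,
    integral_rpow (Or.inl hr), Real.one_rpow, Real.zero_rpow (by linarith : r + 1 ≠ 0)]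
  ring

theorem intervalIntegrable_rescaled (hr : -1 < r) (hψ : ContinuousOn ψ (Ioo (-ε) ε)) {t : ℝ}
    (ht : t ∈ Ioo (-ε) ε) :
    IntervalIntegrable (fun s => s ^ r * ψ (t * s)) volume 0 1 := by
  refine (intervalIntegrable_rpow' hr).mul_continuousOn
    (hψ.comp (continuousOn_const.mul continuousOn_id) fun s hs => ?_)
  rw [uIcc_of_le zero_le_one] at hs
  exact mul_mem_Ioo_of_mem_Icc ht hs

theorem continuousOn_rescaledIntegral (hr : -1 < r) (hψ : ContinuousOn ψ (Ioo (-ε) ε)) :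
    ContinuousOn (rescaledIntegral r ψ) (Ioo (-ε) ε) := by
  intro t₀ ht₀
  obtain ⟨δ, ht₀δ, hδε⟩ : ∃ δ, t₀ ∈ Ioo (-δ) δ ∧ δ < ε :=
    ⟨(|t₀| + ε) / 2, abs_lt.1 (by linarith [abs_lt.2 ht₀]), by linarith [abs_lt.2 ht₀]⟩
  obtain ⟨C, hC⟩ := isCompact_Icc.exists_bound_of_continuousOn
    (hψ.mono (Icc_subset_Ioo (neg_lt_neg hδε) hδε))
  refine (continuousAt_of_dominated_interval (bound := fun s => s ^ r * C) ?_ ?_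
    ((intervalIntegrable_rpow' hr).mul_const C) ?_).continuousWithinAt
  · filter_upwards [isOpen_Ioo.mem_nhds ht₀] with t ht
    exact (intervalIntegrable_rescaled hr hψ ht).def'.aestronglyMeasurable
  · filter_upwards [isOpen_Ioo.mem_nhds ht₀δ] with t ht
    refine Eventually.of_forall fun s hs => ?_
    rw [uIoc_of_le zero_le_one] at hs
    rw [norm_mul, Real.norm_of_nonneg (Real.rpow_nonneg hs.1.le r)]
    exact mul_le_mul_of_nonneg_left
      (hC _ (Ioo_subset_Icc_self (mul_mem_Ioo_of_mem_Icc ht (Ioc_subset_Icc_self hs))))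
      (Real.rpow_nonneg hs.1.le r)
  · refine Eventually.of_forall fun s hs => ?_
    rw [uIoc_of_le zero_le_one] at hs
    exact continuousAt_const.mul ((hψ.continuousAt (isOpen_Ioo.mem_nhds
      (mul_mem_Ioo_of_mem_Icc ht₀ (Ioc_subset_Icc_self hs)))).comp_of_eq
        (continuous_mul_const s).continuousAt rfl)

theorem rescaledIntegral_pos (hr : -1 < r) (hψ : ContinuousOn ψ (Ioo (-ε) ε))
    (hψpos : ∀ t ∈ Ioo (-ε) ε, 0 < ψ t) {t : ℝ} (ht : t ∈ Ioo (-ε) ε) :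
    0 < rescaledIntegral r ψ t :=
  intervalIntegral_pos_of_pos_on (intervalIntegrable_rescaled hr hψ ht)
    (fun _ hs => mul_pos (Real.rpow_pos_of_pos hs.1 r)
      (hψpos _ (mul_mem_Ioo_of_mem_Icc ht (Ioo_subset_Icc_self hs)))) zero_lt_one

theorem hasDerivAt_weightedPrimitive (hr : -1 < r) (hψ : ContinuousOn ψ (Ioo (-ε) ε)) {t : ℝ}
    (ht : t ∈ Ioo (-ε) ε) (ht₀ : t ≠ 0) :
    HasDerivAt (weightedPrimitive r ψ) (|t| ^ r * ψ t) t := by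
  have hU : IsOpen (Ioo (-ε) ε \ {0}) := isOpen_Ioo.sdiff isClosed_singleton
  have hcont : ContinuousOn (fun x => |x| ^ r * ψ x) (Ioo (-ε) ε \ {0}) :=
    (continuous_abs.continuousOn.rpow_const fun x hx => Or.inl (abs_ne_zero.2 hx.2)).mul
      (hψ.mono sdiff_subset)
  have h0 : (0 : ℝ) ∈ Ioo (-ε) ε := ⟨by linarith [ht.1, ht.2], by linarith [ht.1, ht.2]⟩
  exact integral_hasDerivAt_right ((intervalIntegrable_abs_rpow hr 0 t).mul_continuousOn
      (hψ.mono (ordConnected_Ioo.uIcc_subset h0 ht)))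
    (hcont.stronglyMeasurableAtFilter hU t ⟨ht, ht₀⟩) (hcont.continuousAt (hU.mem_nhds ⟨ht, ht₀⟩))

theorem baldomeroMap_eq_mul_rpow (hr : -1 < r) {t : ℝ} (hM : 0 ≤ rescaledIntegral r ψ t) :
    baldomeroMap r ψ t = t * rescaledIntegral r ψ t ^ (1 / (r + 1)) := by
  rw [baldomeroMap, sign_mul_weightedPrimitive hr, Real.mul_rpow (by positivity) hM,
    ← Real.rpow_mul (abs_nonneg t), mul_one_div_cancel (by linarith), Real.rpow_one, ← mul_assoc,
    Real.sign_mul_abs_eq_self]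

theorem hasDerivAt_baldomeroMap_zero (hε : 0 < ε) (hr : -1 < r)
    (hψ : ContinuousOn ψ (Ioo (-ε) ε)) (hψpos : ∀ t ∈ Ioo (-ε) ε, 0 < ψ t) :
    HasDerivAt (baldomeroMap r ψ) (rescaledIntegral r ψ 0 ^ (1 / (r + 1))) 0 := by
  have h0 : (0 : ℝ) ∈ Ioo (-ε) ε := ⟨neg_lt_zero.2 hε, hε⟩
  have hM : ContinuousAt (fun t => rescaledIntegral r ψ t ^ (1 / (r + 1))) 0 :=
    ((continuousOn_rescaledIntegral hr hψ).continuousAt (isOpen_Ioo.mem_nhds h0)).rpow_const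
      (Or.inl (rescaledIntegral_pos hr hψ hψpos h0).ne')
  refine (hasDerivAt_id_smul_zero_of_continuousAt hM).congr_of_eventuallyEq ?_
  filter_upwards [isOpen_Ioo.mem_nhds h0] with t ht
  exact baldomeroMap_eq_mul_rpow hr (rescaledIntegral_pos hr hψ hψpos ht).le

theorem hasDerivAt_baldomeroMap_of_ne_zero (hr : -1 < r) (hψ : ContinuousOn ψ (Ioo (-ε) ε))
    (hψpos : ∀ t ∈ Ioo (-ε) ε, 0 < ψ t) {t : ℝ} (ht : t ∈ Ioo (-ε) ε) (ht₀ : t ≠ 0) :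
    HasDerivAt (baldomeroMap r ψ)
      (ψ t / (r + 1) * rescaledIntegral r ψ t ^ (1 / (r + 1) - 1)) t := by
  have hM := rescaledIntegral_pos hr hψ hψpos ht
  have hr₁ : r + 1 ≠ 0 := by linarith
  have habs : 0 < |t| := abs_pos.2 ht₀
  have hS : 0 < Real.sign t * weightedPrimitive r ψ t := by
    rw [sign_mul_weightedPrimitive hr]; positivity
  have hF := (((hasDerivAt_weightedPrimitive hr hψ ht ht₀).const_mul (Real.sign t)).rpow_const
    (p := 1 / (r + 1)) (Or.inl hS.ne')).const_mul (Real.sign t)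
  refine (hF.congr_of_eventuallyEq ?_).congr_deriv ?_
  · filter_upwards [Real.eventually_sign_eq ht₀] with u hu
    rw [baldomeroMap, hu]
  · have hpow : (|t| ^ (r + 1)) ^ (1 / (r + 1) - 1) = (|t| ^ r)⁻¹ := by
      rw [← Real.rpow_mul habs.le, ← Real.rpow_neg habs.le]
      congr 1
      field_simp
      ring
    rw [sign_mul_weightedPrimitive hr, Real.mul_rpow (by positivity) hM.le, hpow]
    have hσ := Real.sign_mul_sign_of_ne_zero ht₀
    have hr' : |t| ^ r ≠ 0 := (Real.rpow_pos_of_pos habs r).ne'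
    field_simp
    linear_combination ψ t * hσ

theorem hasDerivAt_baldomeroMap (hr : -1 < r) (hψ : ContinuousOn ψ (Ioo (-ε) ε))
    (hψpos : ∀ t ∈ Ioo (-ε) ε, 0 < ψ t) {t : ℝ} (ht : t ∈ Ioo (-ε) ε) :
    HasDerivAt (baldomeroMap r ψ)
      (ψ t / (r + 1) * rescaledIntegral r ψ t ^ (1 / (r + 1) - 1)) t := by
  rcases eq_or_ne t 0 with rfl | ht₀
  · have hM := rescaledIntegral_pos hr hψ hψpos ht
    convert hasDerivAt_baldomeroMap_zero ht.2 hr hψ hψpos using 1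
    rw [Real.rpow_sub_one hM.ne', ← rescaledIntegral_zero hr, mul_div_cancel₀ _ hM.ne']
  · exact hasDerivAt_baldomeroMap_of_ne_zero hr hψ hψpos ht ht₀

theorem contDiffOn_baldomeroMap (hr : -1 < r) (hψ : ContinuousOn ψ (Ioo (-ε) ε))
    (hψpos : ∀ t ∈ Ioo (-ε) ε, 0 < ψ t) : ContDiffOn ℝ 1 (baldomeroMap r ψ) (Ioo (-ε) ε) :=
  contDiffOn_one_of_hasDerivAt isOpen_Ioo (fun _ ht => hasDerivAt_baldomeroMap hr hψ hψpos ht)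
    ((hψ.div_const _).mul ((continuousOn_rescaledIntegral hr hψ).rpow_const
      fun _ ht => Or.inl (rescaledIntegral_pos hr hψ hψpos ht).ne'))

end Baldomero

end

/-- The `C¹` case of Baldomero's theorem: for `r > -1` and `ψ` of class `C¹` on
`(-ε,ε)` with `ψ > 0` there, the function
`F(t) = sign(t)·(sign(t)·∫₀ᵗ |x|^r ψ(x) dx)^{1/(r+1)}` is `C¹` on a neighborhood of `0`
with `F'(0) = (r+1)^{-1/(r+1)}·ψ(0)^{1/(r+1)} > 0`. -/
theorem baldomero_C1 (ε r : ℝ) (hε : 0 < ε) (hr : -1 < r) (ψ : ℝ → ℝ)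
    (hψ : ContDiffOn ℝ 1 ψ (Ioo (-ε) ε)) (hψpos : ∀ t ∈ Ioo (-ε) ε, 0 < ψ t) :
    ∃ δ > 0, δ ≤ ε ∧
      ContDiffOn ℝ 1
        (fun t : ℝ =>
          Real.sign t * (Real.sign t * ∫ x in (0:ℝ)..t, |x| ^ r * ψ x) ^ (1 / (r + 1)))
        (Ioo (-δ) δ) ∧
      HasDerivAt
        (fun t : ℝ =>
          Real.sign t * (Real.sign t * ∫ x in (0:ℝ)..t, |x| ^ r * ψ x) ^ (1 / (r + 1)))
        ((r + 1) ^ (-(1 / (r + 1))) * ψ 0 ^ (1 / (r + 1))) 0 ∧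
      0 < (r + 1) ^ (-(1 / (r + 1))) * ψ 0 ^ (1 / (r + 1)) := by
  have hψc := hψ.continuousOn
  have hr₁ : 0 < r + 1 := by linarith
  have hψ₀ : 0 < ψ 0 := hψpos 0 ⟨neg_lt_zero.2 hε, hε⟩
  have hF'₀ : Baldomero.rescaledIntegral r ψ 0 ^ (1 / (r + 1))
      = (r + 1) ^ (-(1 / (r + 1))) * ψ 0 ^ (1 / (r + 1)) := by
    rw [Baldomero.rescaledIntegral_zero hr, Real.div_rpow hψ₀.le hr₁.le, Real.rpow_neg hr₁.le,
      div_eq_inv_mul]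
  exact ⟨ε, hε, le_rfl, Baldomero.contDiffOn_baldomeroMap hr hψc hψpos,
    hF'₀ ▸ Baldomero.hasDerivAt_baldomeroMap_zero hε hr hψc hψpos, by positivity⟩
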